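/- arXiv:0707.1526 — 4 statements merged into one kernel-verified Lean document; each statement's English description precedes it below -/
import Mathlib

section
/- Let 𝓛 : ℝⁿ × ℝⁿ → ℝ be a C² regular effective Lagrangian. Then a C² curve c : I → ℝⁿ satisfies the Euler–Lagrange equations d/dτ( ∂𝓛/∂yⁱ(c(τ), ċ(τ)) ) − ∂𝓛/∂xⁱ(c(τ), ċ(τ)) = 0 for all i = 1,…,n if and only if it satisfies the semispray (nonlinear geodesic) equations c̈ᵏ(τ) + 2 ᴸGᵏ(c(τ), ċ(τ)) = 0 for all k = 1,…,n. -/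
/-! Along the lift `τ ↦ (c τ, ċ τ)` the chain rule gives
`d/dτ ∂𝓛/∂yⁱ = (∂/∂x ∂𝓛/∂yⁱ)(ċ) + 2 ᴸg_{ij} c̈ʲ`, so the Euler–Lagrange equations say
`2 ᴸg c̈ + F = 0`, where `F` is the vector `sprayForce` occurring in `ᴸG = (1/4) ᴸg⁻¹ F`.
Since `ᴸg` is invertible, this is equivalent to `c̈ + (1/2) ᴸg⁻¹ F = c̈ + 2 ᴸG = 0`.
The mixed second derivative enters both sides in the same order, so its symmetry is not needed. -/

open scoped BigOperators

noncomputable section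

/-- The phase space `ℝⁿ × ℝⁿ` with coordinates `(xⁱ, yᵃ)`. -/
abbrev E (n : ℕ) := (Fin n → ℝ) × (Fin n → ℝ)

/-- Partial derivative `∂𝓛/∂yⁱ`. -/
def pdy {n : ℕ} (L : E n → ℝ) (i : Fin n) (u : E n) : ℝ :=
  fderiv ℝ (fun y => L (u.1, y)) u.2 (Pi.single i 1)

/-- Partial derivative `∂𝓛/∂xⁱ`. -/
def pdx {n : ℕ} (L : E n → ℝ) (i : Fin n) (u : E n) : ℝ :=
  fderiv ℝ (fun x => L (x, u.2)) u.1 (Pi.single i 1)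

/-- The Lagrange metric `ᴸg_{ij}(x,y) = (1/2) ∂²𝓛/∂yⁱ∂yʲ`. -/
def Lg {n : ℕ} (L : E n → ℝ) (u : E n) : Matrix (Fin n) (Fin n) ℝ :=
  Matrix.of fun i j => (1 / 2) * fderiv ℝ (fun y => pdy L i (u.1, y)) u.2 (Pi.single j 1)

/-- Regularity of an effective Lagrangian: the Hessian matrix is invertible everywhere. -/
def Regular {n : ℕ} (L : E n → ℝ) : Prop := ∀ u, IsUnit (Lg L u).det

/-- The canonical semispray coefficients
`ᴸGᵏ = (1/4) ᴸgᵏʲ ( yⁱ ∂²𝓛/∂yʲ∂xⁱ − ∂𝓛/∂xʲ )`. -/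
def Gspray {n : ℕ} (L : E n → ℝ) (k : Fin n) (u : E n) : ℝ :=
  (1 / 4) * ∑ j, (Lg L u)⁻¹ k j *
    ((fderiv ℝ (fun x => pdy L j (x, u.2)) u.1) u.2 - pdx L j u)

open Matrix

theorem Matrix.mulVec_add_eq_zero_iff {ι R : Type*} [Fintype ι] [DecidableEq ι] [CommRing R]
    {A : Matrix ι ι R} (hA : IsUnit A.det) (v w : ι → R) :
    A *ᵥ v + w = 0 ↔ v + A⁻¹ *ᵥ w = 0 := by
  have h₁ : A *ᵥ (v + A⁻¹ *ᵥ w) = A *ᵥ v + w := by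
    rw [mulVec_add, mulVec_mulVec, mul_nonsing_inv A hA, one_mulVec]
  have h₂ : A⁻¹ *ᵥ (A *ᵥ v + w) = v + A⁻¹ *ᵥ w := by
    rw [mulVec_add, mulVec_mulVec, nonsing_inv_mul A hA, one_mulVec]
  constructor
  · intro h
    rw [← h₂, h, mulVec_zero]
  · intro h
    rw [← h₁, h, mulVec_zero]

theorem ContinuousLinearMap.apply_eq_sum_mul_single {ι R : Type*} [Fintype ι] [DecidableEq ι]
    [CommSemiring R] [TopologicalSpace R] (φ : (ι → R) →L[R] R) (w : ι → R) :
    φ w = ∑ j, w j * φ (Pi.single j 1) := by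
  conv_lhs => rw [← (Pi.basisFun R ι).sum_repr w]
  simp

section PartialDerivatives

variable {E F G : Type*} [NormedAddCommGroup E] [NormedSpace ℝ E] [NormedAddCommGroup F]
  [NormedSpace ℝ F] [NormedAddCommGroup G] [NormedSpace ℝ G] {f : E × F → G}

theorem fderiv_comp_prodMk_left {x : E} {y : F} (hf : DifferentiableAt ℝ f (x, y)) :
    fderiv ℝ (fun x' => f (x', y)) x = (fderiv ℝ f (x, y)).comp (.inl ℝ E F) :=
  (hf.hasFDerivAt.comp x (hasFDerivAt_prodMk_left x y)).fderiv

theorem fderiv_comp_prodMk_right {x : E} {y : F} (hf : DifferentiableAt ℝ f (x, y)) :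
    fderiv ℝ (fun y' => f (x, y')) y = (fderiv ℝ f (x, y)).comp (.inr ℝ E F) :=
  (hf.hasFDerivAt.comp y (hasFDerivAt_prodMk_right x y)).fderiv

theorem DifferentiableAt.hasDerivAt_comp_prodMk {p : ℝ → E} {q : ℝ → F} {p' : E} {q' : F}
    {τ : ℝ} (hf : DifferentiableAt ℝ f (p τ, q τ)) (hp : HasDerivAt p p' τ)
    (hq : HasDerivAt q q' τ) :
    HasDerivAt (fun s => f (p s, q s))
      (fderiv ℝ (fun x => f (x, q τ)) (p τ) p' + fderiv ℝ (fun y => f (p τ, y)) (q τ) q') τ := by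
  rw [fderiv_comp_prodMk_left hf, fderiv_comp_prodMk_right hf,
    ContinuousLinearMap.comp_inl_add_comp_inr _ (p', q')]
  exact hf.hasFDerivAt.comp_hasDerivAt τ (hp.prodMk hq)

end PartialDerivatives

variable {n : ℕ} {L : E n → ℝ}

theorem pdy_eq_fderiv_apply {u : E n} (hL : DifferentiableAt ℝ L u) (i : Fin n) :
    pdy L i u = fderiv ℝ L u (0, Pi.single i 1) := by
  rw [pdy, fderiv_comp_prodMk_right hL]
  rfl

theorem contDiff_pdy {k : WithTop ℕ∞} (hL : ContDiff ℝ (k + 1) L) (i : Fin n) :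
    ContDiff ℝ k (pdy L i) := by
  rw [funext fun u => pdy_eq_fderiv_apply (hL.differentiable (by simp) u) i]
  exact (hL.fderiv_right le_rfl).clm_apply contDiff_const

theorem fderiv_pdy_snd_apply (i : Fin n) (u : E n) (w : Fin n → ℝ) :
    fderiv ℝ (fun y => pdy L i (u.1, y)) u.2 w = 2 * (Lg L u *ᵥ w) i := by
  rw [ContinuousLinearMap.apply_eq_sum_mul_single, mulVec, dotProduct, Finset.mul_sum]
  refine Finset.sum_congr rfl fun j _ => ?_
  simp only [Lg, of_apply]
  ring

theorem hasDerivAt_pdy_lift (hL : ContDiff ℝ 2 L) {c : ℝ → Fin n → ℝ} (hc : ContDiff ℝ 2 c)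
    (τ : ℝ) (i : Fin n) :
    HasDerivAt (fun s => pdy L i (c s, deriv c s))
      (fderiv ℝ (fun x => pdy L i (x, deriv c τ)) (c τ) (deriv c τ) +
        2 * (Lg L (c τ, deriv c τ) *ᵥ deriv (deriv c) τ) i) τ := by
  have hc' : ContDiff ℝ 1 (deriv c) := (contDiff_succ_iff_deriv.mp hc).2.2
  rw [← fderiv_pdy_snd_apply]
  exact ((contDiff_pdy hL i).differentiable one_ne_zero _).hasDerivAt_comp_prodMk
    (hc.differentiable two_ne_zero τ).hasDerivAt (hc'.differentiable one_ne_zero τ).hasDerivAt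

def sprayForce (L : E n → ℝ) (u : E n) : Fin n → ℝ :=
  fun j => fderiv ℝ (fun x => pdy L j (x, u.2)) u.1 u.2 - pdx L j u

theorem two_mul_Gspray (k : Fin n) (u : E n) :
    2 * Gspray L k u = ((Lg L u)⁻¹ *ᵥ ((2⁻¹ : ℝ) • sprayForce L u)) k := by
  simp only [Gspray, Pi.smul_apply, mulVec, dotProduct, sprayForce, smul_eq_mul,
    Finset.mul_sum]
  exact Finset.sum_congr rfl fun _ _ => by ring

/-- A `C²` curve satisfies the Euler–Lagrange equations of a `C²` regular effective
Lagrangian iff it satisfies the semispray (nonlinear geodesic) equations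
`c̈ᵏ + 2 ᴸGᵏ(c, ċ) = 0`. -/
theorem eulerLagrange_iff_semispray {n : ℕ} (L : E n → ℝ)
    (hL : ContDiff ℝ 2 L) (hreg : Regular L)
    (c : ℝ → Fin n → ℝ) (hc : ContDiff ℝ 2 c) :
    (∀ (τ : ℝ) (i : Fin n),
        deriv (fun s => pdy L i (c s, deriv c s)) τ - pdx L i (c τ, deriv c τ) = 0) ↔
    (∀ (τ : ℝ) (k : Fin n),
        deriv (deriv c) τ k + 2 * Gspray L k (c τ, deriv c τ) = 0) := by
  refine forall_congr' fun τ => ?_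
  set u : E n := (c τ, deriv c τ)
  have hEL (i : Fin n) : deriv (fun s => pdy L i (c s, deriv c s)) τ - pdx L i u =
      2 * (Lg L u *ᵥ deriv (deriv c) τ + (2⁻¹ : ℝ) • sprayForce L u) i := by
    rw [(hasDerivAt_pdy_lift hL hc τ i).deriv]
    simp only [sprayForce, Pi.add_apply, Pi.smul_apply, smul_eq_mul]
    ring
  simp only [hEL, two_mul_Gspray, mul_eq_zero, two_ne_zero, false_or]
  exact funext_iff.symm.trans ((mulVec_add_eq_zero_iff (hreg u) _ _).trans funext_iff)
end
end

section
/- Let 𝓛 : ℝⁿ × ℝⁿ → ℝ be a smooth regular effective Lagrangian. Define the 1-form ω on ℝⁿ × ℝⁿ by ω(x,y)(X) = (1/2) Σᵢ (∂𝓛/∂yⁱ)(x,y) Xₓⁱ for X = (Xₓ, X_y) ∈ ℝⁿ × ℝⁿ. Then the exterior derivative of ω, given on constant vectors by dω(u)(X,Y) = D_X ω(u)(Y) − D_Y ω(u)(X) (directional derivatives of ω), equals the 2-form θ(u)(X,Y) = Σ_{i,j} ᴸg_{ij}(u) [ (X_yⁱ + ᴸNⁱ_k(u) Xₓᵏ)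 Yₓʲ − (Y_yⁱ + ᴸNⁱ_k(u) Yₓᵏ) Xₓʲ ]; that is, θ = ᴸg_{ij} (dyⁱ + ᴸNⁱ_k dxᵏ) ∧ dxʲ coincides with dω. -/
open scoped BigOperators

noncomputable section

/-- The canonical N-connection `ᴸNᵏⱼ = ∂ᴸGᵏ/∂yʲ`. -/
def LN {n : ℕ} (L : E n → ℝ) (k j : Fin n) (u : E n) : ℝ :=
  fderiv ℝ (fun y => Gspray L k (u.1, y)) u.2 (Pi.single j 1)

/-- The canonical 1-form `ω(X) = (1/2) (∂𝓛/∂yⁱ) Xₓⁱ`. -/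
def omega1 {n : ℕ} (L : E n → ℝ) (u : E n) (X : E n) : ℝ :=
  (1 / 2) * ∑ i, pdy L i u * X.1 i

/-- The almost symplectic 2-form `θ = ᴸg_{ij} (dyⁱ + ᴸNⁱ_k dxᵏ) ∧ dxʲ`. -/
def theta2 {n : ℕ} (L : E n → ℝ) (u : E n) (X Y : E n) : ℝ :=
  ∑ i, ∑ j, Lg L u i j *
    ((X.2 i + ∑ k, LN L i k u * X.1 k) * Y.1 j
      - (Y.2 i + ∑ k, LN L i k u * Y.1 k) * X.1 j)

namespace DOmega

open ContinuousLinearMap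

variable {n : ℕ}

def ex (n : ℕ) (i : Fin n) : E n := (Pi.single i 1, 0)
def ey (n : ℕ) (i : Fin n) : E n := (0, Pi.single i 1)

lemma fderiv_apply_const {H G F : Type*} [NormedAddCommGroup H] [NormedSpace ℝ H]
    [NormedAddCommGroup G] [NormedSpace ℝ G] [NormedAddCommGroup F] [NormedSpace ℝ F]
    {c : H → G →L[ℝ] F} {u : H} (hc : DifferentiableAt ℝ c u) (e : G) :
    fderiv ℝ (fun v => c v e) u = (fderiv ℝ c u).flip e := by
  have h := fderiv_clm_apply hc (differentiableAt_const e)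
  simpa using h

lemma fderiv_comp_ry {F : Type*} [NormedAddCommGroup F] [NormedSpace ℝ F]
    {f : E n → F} {u : E n} (hf : DifferentiableAt ℝ f u) :
    fderiv ℝ (fun y => f (u.1, y)) u.2 = (fderiv ℝ f u).comp (inr ℝ _ _) :=
  (hf.hasFDerivAt.comp u.2 (hasFDerivAt_prodMk_right u.1 u.2)).fderiv

lemma fderiv_comp_rx {F : Type*} [NormedAddCommGroup F] [NormedSpace ℝ F]
    {f : E n → F} {u : E n} (hf : DifferentiableAt ℝ f u) :
    fderiv ℝ (fun x => f (x, u.2)) u.1 = (fderiv ℝ f u).comp (inl ℝ _ _) :=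
  (hf.hasFDerivAt.comp u.1 (hasFDerivAt_prodMk_left u.1 u.2)).fderiv

variable (L : E n → ℝ)

def D2 (L : E n → ℝ) : E n → E n →L[ℝ] E n →L[ℝ] ℝ := fderiv ℝ (fderiv ℝ L)
def D3 (L : E n → ℝ) (u z w e : E n) : ℝ := fderiv ℝ (D2 L) u z w e

variable (hL : ContDiff ℝ (⊤ : ℕ∞) L)
include hL

lemma hDf : ContDiff ℝ (⊤ : ℕ∞) (fderiv ℝ L) := hL.fderiv_right (by simp)
lemma hD2 : ContDiff ℝ (⊤ : ℕ∞) (D2 L) := (hDf L hL).fderiv_right (by simp)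

lemma pdy_eq (i : Fin n) (u : E n) : pdy L i u = fderiv ℝ L u (ey n i) := by
  rw [pdy, fderiv_comp_ry (hL.differentiable (by simp) u)]; rfl

lemma pdx_eq (i : Fin n) (u : E n) : pdx L i u = fderiv ℝ L u (ex n i) := by
  rw [pdx, fderiv_comp_rx (hL.differentiable (by simp) u)]; rfl

lemma fderiv_D1_app (e : E n) (u z : E n) :
    fderiv ℝ (fun v => fderiv ℝ L v e) u z = D2 L u z e := by
  rw [fderiv_apply_const ((hDf L hL).differentiable (by simp) u) e]; rfl

lemma smooth_D1_app (e : E n) : ContDiff ℝ (⊤ : ℕ∞) (fun v => fderiv ℝ L v e) :=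
  (hDf L hL).clm_apply contDiff_const

lemma smooth_D2_app2 (w e : E n) : ContDiff ℝ (⊤ : ℕ∞) (fun v => D2 L v w e) :=
  ((hD2 L hL).clm_apply contDiff_const).clm_apply contDiff_const

lemma fderiv_D2_app (w e : E n) (u z : E n) :
    fderiv ℝ (fun v => D2 L v w e) u z = D3 L u z w e := by
  have hc : DifferentiableAt ℝ (fun v => D2 L v w) u :=
    (((hD2 L hL).clm_apply contDiff_const).differentiable (by simp)) u
  rw [fderiv_apply_const hc e, flip_apply,
    fderiv_apply_const (((hD2 L hL).differentiable (by simp)) u) w]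
  rfl

lemma D2_symm (u z w : E n) : D2 L u z w = D2 L u w z :=
  (hL.contDiffAt.isSymmSndFDerivAt (by rw [minSmoothness_of_isRCLikeNormedField]; exact WithTop.coe_le_coe.mpr (le_top : (2 : ℕ∞) ≤ ⊤))) z w

end DOmega

namespace DOmega
open ContinuousLinearMap
variable {n : ℕ} (L : E n → ℝ) (hL : ContDiff ℝ (⊤ : ℕ∞) L)
include hL

lemma D3_symm23 (u z w e : E n) : D3 L u z w e = D3 L u z e w := by
  have h : (fun v => D2 L v w e) = fun v => D2 L v e w := funext fun v => D2_symm L hL v w e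
  rw [← fderiv_D2_app L hL w e u z, ← fderiv_D2_app L hL e w u z, h]

lemma D3_symm12 (u z w e : E n) : D3 L u z w e = D3 L u w z e := by
  have hgs : ContDiff ℝ (⊤ : ℕ∞) (fun v => fderiv ℝ L v e) := smooth_D1_app L hL e
  have hkey : ∀ z w : E n,
      fderiv ℝ (fderiv ℝ (fun v => fderiv ℝ L v e)) u z w = D3 L u z w e := by
    intro z w
    have hc : DifferentiableAt ℝ (fderiv ℝ (fun v => fderiv ℝ L v e)) u :=
      ((hgs.fderiv_right (m := (⊤ : ℕ∞)) (by simp)).differentiable (by simp)) u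
    have h0 : fderiv ℝ (fderiv ℝ (fun v => fderiv ℝ L v e)) u z w
        = fderiv ℝ (fun v => fderiv ℝ (fun v' => fderiv ℝ L v' e) v w) u z := by
      rw [fderiv_apply_const hc w, flip_apply]
    rw [h0]
    have h1 : (fun v => fderiv ℝ (fun v' => fderiv ℝ L v' e) v w)
        = fun v => D2 L v w e := by
      funext v
      rw [fderiv_apply_const ((hDf L hL).differentiable (by simp) v) e, flip_apply]; rfl
    rw [h1, fderiv_D2_app L hL w e u z]
  have hs := ((hgs.contDiffAt (x := u)).isSymmSndFDerivAt (by rw [minSmoothness_of_isRCLikeNormedField]; exact WithTop.coe_le_coe.mpr (le_top : (2 : ℕ∞) ≤ ⊤))) z w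
  rw [hkey z w, hkey w z] at hs; exact hs

lemma D3_symm13 (u z w e : E n) : D3 L u z w e = D3 L u e w z := by
  rw [D3_symm23 L hL, D3_symm12 L hL, D3_symm23 L hL]

end DOmega

namespace DOmega
open ContinuousLinearMap
variable {n : ℕ} (L : E n → ℝ) (hL : ContDiff ℝ (⊤ : ℕ∞) L)
include hL

lemma Lg_eq (u : E n) (i j : Fin n) : Lg L u i j = (1/2) * D2 L u (ey n j) (ey n i) := by
  have h1 : (fun y => pdy L i (u.1, y)) = fun y => (fun v => fderiv ℝ L v (ey n i)) (u.1, y) :=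
    funext fun y => pdy_eq L hL i (u.1, y)
  rw [Lg, Matrix.of_apply, h1,
    fderiv_comp_ry ((smooth_D1_app L hL (ey n i)).differentiable (by simp) u)]
  rw [comp_apply]
  congr 1
  have : (inr ℝ (Fin n → ℝ) (Fin n → ℝ)) (Pi.single j 1) = ey n j := rfl
  rw [this, fderiv_apply_const ((hDf L hL).differentiable (by simp) u) (ey n i), flip_apply]
  rfl

lemma Lg_symm (u : E n) (i j : Fin n) : Lg L u i j = Lg L u j i := by
  rw [Lg_eq L hL, Lg_eq L hL, D2_symm L hL]

/-- The vector `F_j` appearing in the semispray. -/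
def Fv (L : E n → ℝ) (j : Fin n) (u : E n) : ℝ :=
  D2 L u (u.2, 0) (ey n j) - fderiv ℝ L u (ex n j)

lemma mixed_eq (u : E n) (j : Fin n) :
    (fderiv ℝ (fun x => pdy L j (x, u.2)) u.1) u.2 = D2 L u (u.2, 0) (ey n j) := by
  have h1 : (fun x => pdy L j (x, u.2)) = fun x => (fun v => fderiv ℝ L v (ey n j)) (x, u.2) :=
    funext fun x => pdy_eq L hL j (x, u.2)
  rw [h1, fderiv_comp_rx ((smooth_D1_app L hL (ey n j)).differentiable (by simp) u), comp_apply]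
  have : (inl ℝ (Fin n → ℝ) (Fin n → ℝ)) u.2 = ((u.2 : Fin n → ℝ), (0 : Fin n → ℝ)) := rfl
  rw [this, fderiv_apply_const ((hDf L hL).differentiable (by simp) u) (ey n j), flip_apply]
  rfl

lemma Gspray_eq (u : E n) (k : Fin n) :
    Gspray L k u = (1/4) * ∑ j, (Lg L u)⁻¹ k j * Fv L j u := by
  rw [Gspray]
  congr 1
  refine Finset.sum_congr rfl fun j _ => ?_
  rw [mixed_eq L hL, pdx_eq L hL, Fv]

end DOmega

namespace DOmega
open ContinuousLinearMap
variable {n : ℕ} (L : E n → ℝ) (hL : ContDiff ℝ (⊤ : ℕ∞) L)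
include hL

lemma smooth_Lg (i j : Fin n) : ContDiff ℝ (⊤ : ℕ∞) (fun u => Lg L u i j) := by
  have h : (fun u => Lg L u i j) = fun u => (1/2) * D2 L u (ey n j) (ey n i) :=
    funext fun u => Lg_eq L hL u i j
  rw [h]
  exact contDiff_const.mul (smooth_D2_app2 L hL _ _)

lemma smooth_Fv (j : Fin n) : ContDiff ℝ (⊤ : ℕ∞) (Fv L j) := by
  have h1 : ContDiff ℝ (⊤ : ℕ∞) (fun u : E n => D2 L u (u.2, 0) (ey n j)) :=
    ((hD2 L hL).clm_apply (contDiff_snd.prodMk contDiff_const)).clm_apply contDiff_const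
  exact h1.sub (smooth_D1_app L hL (ex n j))

omit hL

lemma contDiff_det' {M : E n → Matrix (Fin n) (Fin n) ℝ}
    (h : ∀ i j, ContDiff ℝ (⊤ : ℕ∞) fun u => M u i j) :
    ContDiff ℝ (⊤ : ℕ∞) fun u => (M u).det := by
  simp only [Matrix.det_apply']
  exact ContDiff.sum fun σ _ => contDiff_const.mul (contDiff_prod fun i _ => h (σ i) i)

include hL

lemma smooth_det : ContDiff ℝ (⊤ : ℕ∞) fun u => (Lg L u).det :=
  contDiff_det' fun i j => smooth_Lg L hL i j

lemma smooth_adj (i j : Fin n) : ContDiff ℝ (⊤ : ℕ∞) fun u => (Lg L u).adjugate i j := by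
  have h : (fun u => (Lg L u).adjugate i j)
      = fun u => ((Lg L u).updateRow j (Pi.single i 1)).det :=
    funext fun u => Matrix.adjugate_apply _ i j
  rw [h]
  refine contDiff_det' fun k l => ?_
  by_cases hk : k = j
  · simp only [Matrix.updateRow_apply, hk, if_pos rfl]
    exact contDiff_const
  · simp only [Matrix.updateRow_apply, if_neg hk]
    exact smooth_Lg L hL k l

variable (hreg : Regular L)
include hreg

lemma contDiffAt_inv_entry (u : E n) (k j : Fin n) :
    ContDiffAt ℝ (⊤ : ℕ∞) (fun v => (Lg L v)⁻¹ k j) u := by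
  have h : (fun v => (Lg L v)⁻¹ k j)
      = fun v => ((Lg L v).det)⁻¹ * (Lg L v).adjugate k j := by
    funext v
    rw [Matrix.inv_def, Matrix.smul_apply, Ring.inverse_eq_inv, smul_eq_mul]
  rw [h]
  exact (((smooth_det L hL).contDiffAt (x := u)).inv
    (isUnit_iff_ne_zero.mp (hreg u))).mul ((smooth_adj L hL k j).contDiffAt)

lemma contDiffAt_Gspray (u : E n) (k : Fin n) : ContDiffAt ℝ (⊤ : ℕ∞) (Gspray L k) u := by
  have h : Gspray L k = fun v => (1/4) * ∑ j, (Lg L v)⁻¹ k j * Fv L j v :=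
    funext fun v => Gspray_eq L hL v k
  rw [h]
  exact contDiffAt_const.mul (ContDiffAt.sum fun j _ =>
    (contDiffAt_inv_entry L hL hreg u k j).mul ((smooth_Fv L hL j).contDiffAt))

lemma sum_g_G (u : E n) (i : Fin n) :
    ∑ k, Lg L u i k * Gspray L k u = (1/4) * Fv L i u := by
  have hmul : Lg L u * (Lg L u)⁻¹ = 1 := Matrix.mul_nonsing_inv _ (hreg u)
  have hentry : ∀ j, ∑ k, Lg L u i k * (Lg L u)⁻¹ k j = if i = j then 1 else 0 := by
    intro j
    have := congrFun (congrFun hmul i) j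
    rw [Matrix.mul_apply] at this
    rw [this, Matrix.one_apply]
  calc ∑ k, Lg L u i k * Gspray L k u
      = ∑ k, ∑ j, (1/4) * (Lg L u i k * ((Lg L u)⁻¹ k j * Fv L j u)) := by
        refine Finset.sum_congr rfl fun k _ => ?_
        rw [Gspray_eq L hL, Finset.mul_sum, Finset.mul_sum]
        exact Finset.sum_congr rfl fun j _ => by ring
    _ = ∑ j, (1/4) * ((∑ k, Lg L u i k * (Lg L u)⁻¹ k j) * Fv L j u) := by
        rw [Finset.sum_comm]
        refine Finset.sum_congr rfl fun j _ => ?_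
        rw [Finset.sum_mul, Finset.mul_sum]
        exact Finset.sum_congr rfl fun k _ => by ring
    _ = (1/4) * Fv L i u := by
        simp only [hentry]
        rw [Finset.sum_eq_single i]
        · simp
        · intro b _ hb; simp [Ne.symm hb]
        · intro hb; simp at hb

end DOmega

namespace DOmega
open ContinuousLinearMap
variable {n : ℕ} (L : E n → ℝ) (hL : ContDiff ℝ (⊤ : ℕ∞) L)
include hL

lemma dy_Lg (u : E n) (a b i : Fin n) :
    fderiv ℝ (fun y => Lg L (u.1, y) b i) u.2 (Pi.single a 1)
      = (1/2) * D3 L u (ey n a) (ey n i) (ey n b) := by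
  have hf : DifferentiableAt ℝ (fun v => D2 L v (ey n i) (ey n b)) u :=
    (smooth_D2_app2 L hL _ _).differentiable (by simp) u
  have h1 : (fun y => Lg L (u.1, y) b i)
      = fun y => (1/2) * (fun v => D2 L v (ey n i) (ey n b)) (u.1, y) :=
    funext fun y => Lg_eq L hL (u.1, y) b i
  have hdiff : DifferentiableAt ℝ
      (fun y => (fun v => D2 L v (ey n i) (ey n b)) (u.1, y)) u.2 :=
    by have h := hf.comp u.2 (hasFDerivAt_prodMk_right (𝕜 := ℝ) u.1 u.2).differentiableAt; exact h
  rw [h1, fderiv_const_mul hdiff, smul_apply, smul_eq_mul]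
  congr 1
  rw [fderiv_comp_ry hf, comp_apply]
  exact fderiv_D2_app L hL (ey n i) (ey n b) u (ey n a)

lemma dy_Fv (u : E n) (a b : Fin n) :
    fderiv ℝ (fun y => Fv L b (u.1, y)) u.2 (Pi.single a 1)
      = D3 L u (ey n a) (u.2, 0) (ey n b) + D2 L u (ex n a) (ey n b)
        - D2 L u (ey n a) (ex n b) := by
  have hc1 : ContDiff ℝ (⊤ : ℕ∞) (fun y : Fin n → ℝ => D2 L (u.1, y)) :=
    (hD2 L hL).comp (contDiff_prodMk_right u.1)
  have hc1d : DifferentiableAt ℝ (fun y : Fin n → ℝ => D2 L (u.1, y)) u.2 :=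
    hc1.differentiable (by simp) u.2
  have hw : DifferentiableAt ℝ (fun y : Fin n → ℝ => ((y, 0) : E n)) u.2 :=
    (differentiable_id.prodMk (differentiable_const 0)) u.2
  have hc : DifferentiableAt ℝ (fun y => D2 L (u.1, y) (y, 0)) u.2 :=
    hc1d.clm_apply hw
  have hp1 : DifferentiableAt ℝ (fun y => D2 L (u.1, y) (y, 0) (ey n b)) u.2 :=
    hc.clm_apply (differentiableAt_const _)
  have hp2d : DifferentiableAt ℝ (fun v => fderiv ℝ L v (ex n b)) u :=
    (smooth_D1_app L hL (ex n b)).differentiable (by simp) u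
  have hp2 : DifferentiableAt ℝ (fun y => fderiv ℝ L (u.1, y) (ex n b)) u.2 :=
    by have h := hp2d.comp u.2 (hasFDerivAt_prodMk_right (𝕜 := ℝ) u.1 u.2).differentiableAt; exact h
  have hfv : (fun y => Fv L b (u.1, y))
      = fun y => D2 L (u.1, y) (y, 0) (ey n b) - fderiv ℝ L (u.1, y) (ex n b) := rfl
  rw [hfv, fderiv_fun_sub hp1 hp2, sub_apply]
  have e2 : fderiv ℝ (fun y => fderiv ℝ L (u.1, y) (ex n b)) u.2 (Pi.single a 1)
      = D2 L u (ey n a) (ex n b) := by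
    rw [show (fun y => fderiv ℝ L (u.1, y) (ex n b))
        = fun y => (fun v => fderiv ℝ L v (ex n b)) (u.1, y) from rfl,
      fderiv_comp_ry hp2d, comp_apply]
    exact fderiv_D1_app L hL (ex n b) u (ey n a)
  have e1 : fderiv ℝ (fun y => D2 L (u.1, y) (y, 0) (ey n b)) u.2 (Pi.single a 1)
      = D3 L u (ey n a) (u.2, 0) (ey n b) + D2 L u (ex n a) (ey n b) := by
    rw [fderiv_apply_const hc (ey n b), flip_apply]
    rw [fderiv_clm_apply hc1d hw]
    have hwf : fderiv ℝ (fun y : Fin n → ℝ => ((y, 0) : E n)) u.2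
        = inl ℝ (Fin n → ℝ) (Fin n → ℝ) :=
      (hasFDerivAt_prodMk_left u.2 (0 : Fin n → ℝ)).fderiv
    have hc1f : fderiv ℝ (fun y : Fin n → ℝ => D2 L (u.1, y)) u.2
        = (fderiv ℝ (D2 L) u).comp (inr ℝ (Fin n → ℝ) (Fin n → ℝ)) :=
      fderiv_comp_ry ((hD2 L hL).differentiable (by simp) u)
    rw [hwf, hc1f]
    rw [add_apply, comp_apply, flip_apply, comp_apply, add_apply]
    have h1 : (inl ℝ (Fin n → ℝ) (Fin n → ℝ)) (Pi.single a 1) = ex n a := rfl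
    have h2 : (inr ℝ (Fin n → ℝ) (Fin n → ℝ)) (Pi.single a 1) = ey n a := rfl
    rw [h1, h2]
    rw [add_comm]
    rfl
  rw [e1, e2]

end DOmega

namespace DOmega
open ContinuousLinearMap
variable {n : ℕ} (L : E n → ℝ) (hL : ContDiff ℝ (⊤ : ℕ∞) L) (hreg : Regular L)
include hL hreg

lemma m_identity (u : E n) (b a : Fin n) :
    ∑ i, Lg L u b i * LN L i a u
      = (1/4) * (D3 L u (ey n a) (u.2, 0) (ey n b) + D2 L u (ex n a) (ey n b)
          - D2 L u (ey n a) (ex n b))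
        - ∑ i, ((1/2) * D3 L u (ey n a) (ey n i) (ey n b)) * Gspray L i u := by
  have hgi : ∀ i : Fin n, DifferentiableAt ℝ (fun y => Lg L (u.1, y) b i) u.2 := fun i =>
    by have h := ((smooth_Lg L hL b i).differentiable (by simp) u).comp u.2
            (hasFDerivAt_prodMk_right (𝕜 := ℝ) u.1 u.2).differentiableAt; exact h
  have hGi : ∀ i : Fin n, DifferentiableAt ℝ (fun y => Gspray L i (u.1, y)) u.2 := fun i =>
    by have h := ((contDiffAt_Gspray L hL hreg u i).differentiableAt (by simp)).comp u.2
            (hasFDerivAt_prodMk_right (𝕜 := ℝ) u.1 u.2).differentiableAt; exact h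
  have hfun : (fun y => ∑ i, Lg L (u.1, y) b i * Gspray L i (u.1, y))
      = fun y => (1/4) * Fv L b (u.1, y) :=
    funext fun y => sum_g_G L hL hreg (u.1, y) b
  have hD := congrArg (fun f : (Fin n → ℝ) → ℝ => fderiv ℝ f u.2 (Pi.single a 1)) hfun
  have hterm : ∀ i : Fin n,
      fderiv ℝ (fun y => Lg L (u.1, y) b i * Gspray L i (u.1, y)) u.2 (Pi.single a 1)
      = Lg L u b i * LN L i a u
        + Gspray L i u * ((1/2) * D3 L u (ey n a) (ey n i) (ey n b)) := by
    intro i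
    rw [fderiv_fun_mul (hgi i) (hGi i), add_apply, smul_apply, smul_apply, smul_eq_mul,
      smul_eq_mul, dy_Lg L hL u a b i]
    rfl
  have hR : fderiv ℝ (fun y => (1/4) * Fv L b (u.1, y)) u.2 (Pi.single a 1)
      = (1/4) * (D3 L u (ey n a) (u.2, 0) (ey n b) + D2 L u (ex n a) (ey n b)
          - D2 L u (ey n a) (ex n b)) := by
    have hFb : DifferentiableAt ℝ (fun y => Fv L b (u.1, y)) u.2 :=
      by have h := ((smooth_Fv L hL b).differentiable (by simp) u).comp u.2
              (hasFDerivAt_prodMk_right (𝕜 := ℝ) u.1 u.2).differentiableAt; exact h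
    rw [fderiv_const_mul hFb, smul_apply, smul_eq_mul, dy_Fv L hL u a b]
  rw [fderiv_fun_sum (fun i (_ : i ∈ Finset.univ) => (hgi i).fun_mul (hGi i)), sum_apply] at hD
  simp only [hterm] at hD
  rw [hR, Finset.sum_add_distrib] at hD
  have hcomm : ∑ i, ((1/2) * D3 L u (ey n a) (ey n i) (ey n b)) * Gspray L i u
      = ∑ i, Gspray L i u * ((1/2) * D3 L u (ey n a) (ey n i) (ey n b)) :=
    Finset.sum_congr rfl fun i _ => mul_comm _ _
  rw [hcomm]
  linarith [hD]

end DOmega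

namespace DOmega
open ContinuousLinearMap
variable {n : ℕ} (L : E n → ℝ) (hL : ContDiff ℝ (⊤ : ℕ∞) L) (hreg : Regular L)

omit hreg in
include hL in
lemma fderiv_omega (u X Y : E n) :
    fderiv ℝ (fun v => omega1 L v Y) u X = (1/2) * ∑ i, D2 L u X (ey n i) * Y.1 i := by
  have h1 : (fun v => omega1 L v Y)
      = fun v => (1/2) * ∑ i, fderiv ℝ L v (ey n i) * Y.1 i := by
    funext v
    rw [omega1]
    congr 1
    exact Finset.sum_congr rfl fun i _ => by rw [pdy_eq L hL]
  have hdi : ∀ i : Fin n, DifferentiableAt ℝ (fun v => fderiv ℝ L v (ey n i) * Y.1 i) u :=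
    fun i => ((smooth_D1_app L hL (ey n i)).differentiable (by simp) u).mul_const _
  rw [h1, fderiv_const_mul (DifferentiableAt.fun_sum fun i _ => hdi i), smul_apply, smul_eq_mul]
  congr 1
  rw [fderiv_fun_sum (fun i (_ : i ∈ Finset.univ) => hdi i), sum_apply]
  refine Finset.sum_congr rfl fun i _ => ?_
  rw [fderiv_mul_const ((smooth_D1_app L hL (ey n i)).differentiable (by simp) u),
    smul_apply, smul_eq_mul, fderiv_D1_app L hL (ey n i) u X, mul_comm]

lemma vec_decomp (X : E n) : X = (∑ j, X.1 j • ex n j) + ∑ j, X.2 j • ey n j := by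
  refine Prod.ext ?_ ?_ <;> funext m <;>
    simp [ex, ey, Prod.fst_sum, Prod.snd_sum, Finset.sum_apply, Pi.single_apply]

lemma clm_decomp (B : E n →L[ℝ] ℝ) (X : E n) :
    B X = (∑ j, X.1 j * B (ex n j)) + ∑ j, X.2 j * B (ey n j) := by
  conv_lhs => rw [vec_decomp X]
  rw [map_add, map_sum, map_sum]
  simp [smul_eq_mul]

include hL in
omit hreg in
lemma D2_decomp (u X e : E n) :
    D2 L u X e = (∑ j, X.1 j * D2 L u (ex n j) e) + ∑ j, X.2 j * D2 L u (ey n j) e := by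
  have h := clm_decomp ((D2 L u).flip e) X
  simpa [flip_apply] using h

omit hreg in
lemma antisym_helper (f : Fin n → Fin n → ℝ) (x y : Fin n → ℝ) :
    ∑ j, ∑ k, f j k * (x k * y j - y k * x j)
      = ∑ j, ∑ k, (f j k - f k j) * (x k * y j) := by
  have h1 : ∀ j k : Fin n, f j k * (x k * y j - y k * x j)
      = f j k * (x k * y j) - f j k * (y k * x j) := fun j k => by ring
  have h2 : ∀ j k : Fin n, (f j k - f k j) * (x k * y j)
      = f j k * (x k * y j) - f k j * (x k * y j) := fun j k => by ring
  simp only [h1, h2, Finset.sum_sub_distrib]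
  congr 1
  rw [Finset.sum_comm]
  exact Finset.sum_congr rfl fun k _ => Finset.sum_congr rfl fun j _ => by ring

include hL hreg in
lemma m_antisym (u : E n) (a b : Fin n) :
    (∑ i, Lg L u b i * LN L i a u) - (∑ i, Lg L u a i * LN L i b u)
      = (1/2) * (D2 L u (ex n a) (ey n b) - D2 L u (ex n b) (ey n a)) := by
  rw [m_identity L hL hreg u b a, m_identity L hL hreg u a b]
  have hsums : ∑ i, ((1/2) * D3 L u (ey n a) (ey n i) (ey n b)) * Gspray L i u
      = ∑ i, ((1/2) * D3 L u (ey n b) (ey n i) (ey n a)) * Gspray L i u :=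
    Finset.sum_congr rfl fun i _ => by rw [D3_symm13 L hL]
  have h1 : D3 L u (ey n a) (u.2, 0) (ey n b) = D3 L u (ey n b) (u.2, 0) (ey n a) :=
    D3_symm13 L hL u _ _ _
  rw [hsums, h1, D2_symm L hL u (ey n a) (ex n b), D2_symm L hL u (ey n b) (ex n a)]
  ring

end DOmega

open DOmega in
/-- For a smooth regular effective Lagrangian, the exterior derivative of the canonical
1-form `ω`, evaluated on constant vectors by `dω(u)(X,Y) = D_X ω(u)(Y) − D_Y ω(u)(X)`,
coincides with the 2-form `θ = ᴸg_{ij} (dyⁱ + ᴸNⁱ_k dxᵏ) ∧ dxʲ`. -/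
theorem dOmega_eq_theta {n : ℕ} (L : E n → ℝ)
    (hL : ContDiff ℝ (⊤ : ℕ∞) L) (hreg : Regular L) :
    ∀ (u : E n) (X Y : E n),
      fderiv ℝ (fun v => omega1 L v Y) u X - fderiv ℝ (fun v => omega1 L v X) u Y =
        theta2 L u X Y := by
  intro u X Y
  rw [fderiv_omega L hL u X Y, fderiv_omega L hL u Y X]
  -- canonical form of the left-hand side
  have hLHS : (1/2) * (∑ i, D2 L u X (ey n i) * Y.1 i)
        - (1/2) * (∑ i, D2 L u Y (ey n i) * X.1 i)
      = (∑ i, ∑ j, ((1/2) * D2 L u (ey n j) (ey n i)) * (X.2 j * Y.1 i - Y.2 j * X.1 i))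
        + ∑ i, ∑ j, ((1/2) * D2 L u (ex n j) (ey n i)) * (X.1 j * Y.1 i - Y.1 j * X.1 i) := by
    rw [Finset.mul_sum, Finset.mul_sum, ← Finset.sum_sub_distrib, ← Finset.sum_add_distrib]
    refine Finset.sum_congr rfl fun i _ => ?_
    rw [D2_decomp L hL u X (ey n i), D2_decomp L hL u Y (ey n i)]
    rw [← Finset.sum_add_distrib, ← Finset.sum_add_distrib, ← Finset.sum_add_distrib,
      Finset.sum_mul, Finset.sum_mul, Finset.mul_sum, Finset.mul_sum,
      ← Finset.sum_sub_distrib]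
    exact Finset.sum_congr rfl fun j _ => by ring
  rw [hLHS]
  -- canonical form of theta2
  have hT : theta2 L u X Y
      = (∑ i, ∑ j, Lg L u i j * (X.2 i * Y.1 j - Y.2 i * X.1 j))
        + ∑ j, ∑ k, (∑ i, Lg L u i j * LN L i k u) * (X.1 k * Y.1 j - Y.1 k * X.1 j) := by
    rw [theta2]
    have hterm : ∀ i j : Fin n, Lg L u i j * ((X.2 i + ∑ k, LN L i k u * X.1 k) * Y.1 j
        - (Y.2 i + ∑ k, LN L i k u * Y.1 k) * X.1 j)
        = Lg L u i j * (X.2 i * Y.1 j - Y.2 i * X.1 j)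
          + ∑ k, (Lg L u i j * LN L i k u) * (X.1 k * Y.1 j - Y.1 k * X.1 j) := by
      intro i j
      have e0 : ∀ k : Fin n, (Lg L u i j * LN L i k u) * (X.1 k * Y.1 j - Y.1 k * X.1 j)
          = Lg L u i j * ((LN L i k u * X.1 k) * Y.1 j)
            - Lg L u i j * ((LN L i k u * Y.1 k) * X.1 j) := fun k => by ring
      simp only [e0, Finset.sum_sub_distrib, ← Finset.mul_sum, ← Finset.sum_mul]
      ring
    simp only [hterm]
    simp only [Finset.sum_add_distrib]
    congr 1
    rw [Finset.sum_comm]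
    refine Finset.sum_congr rfl fun j _ => ?_
    rw [Finset.sum_comm]
    refine Finset.sum_congr rfl fun k _ => ?_
    rw [Finset.sum_mul]
  rw [hT]
  congr 1
  -- the metric part
  · have : (∑ i, ∑ j, Lg L u i j * (X.2 i * Y.1 j - Y.2 i * X.1 j))
        = ∑ j, ∑ i, Lg L u i j * (X.2 i * Y.1 j - Y.2 i * X.1 j) := Finset.sum_comm
    rw [this]
    refine Finset.sum_congr rfl fun i _ => Finset.sum_congr rfl fun j _ => ?_
    rw [Lg_eq L hL u j i, D2_symm L hL u (ey n i) (ey n j)]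
  -- the N-connection part
  · rw [antisym_helper, antisym_helper]
    refine Finset.sum_congr rfl fun j _ => Finset.sum_congr rfl fun k _ => ?_
    congr 1
    have hm : ∀ j k : Fin n, (∑ i, Lg L u i j * LN L i k u)
        = ∑ i, Lg L u j i * LN L i k u := fun j k =>
      Finset.sum_congr rfl fun i _ => by rw [Lg_symm L hL u i j]
    rw [hm j k, hm k j, m_antisym L hL hreg u k j]
    ring
end
end

section
/- Let 𝓛 : ℝⁿ × ℝⁿ → ℝ be a smooth regular effective Lagrangian and let θ be the 2-form on ℝⁿ × ℝⁿ with θ(u)(X,Y) = Σ_{i,j} ᴸg_{ij}(u) [ (X_yⁱ + ᴸNⁱ_k(u) Xₓᵏ) Yₓʲ − (Y_yⁱ + ᴸNⁱ_k(u) Yₓᵏ) Xₓʲ ]. Then θ is closed: for all u ∈ ℝⁿ × ℝⁿ and all constant vectors X, Y, Z, the cyclic sum D_X θ(u)(Y,Z) + D_Y θ(u)(Z,X) + D_Z θ(u)(X,Y) = 0, where D_X denotes the directional derivative of the coefficient 2-form in direction X. -/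
open scoped BigOperators

noncomputable section

section AuxProof

variable {n : ℕ} {L : E n → ℝ}

def Dd (f : E n → ℝ) (w : E n) (u : E n) : ℝ := fderiv ℝ f u w

lemma fderiv_fix_x (f : E n → ℝ) (hf : Differentiable ℝ f) (u : E n) (v : Fin n → ℝ) :
    fderiv ℝ (fun y => f (u.1, y)) u.2 v = fderiv ℝ f u (0, v) := by
  have h : HasFDerivAt (fun y : Fin n → ℝ => f (u.1, y))
      ((fderiv ℝ f u).comp (ContinuousLinearMap.inr ℝ (Fin n → ℝ) (Fin n → ℝ))) u.2 :=
    (hf u).hasFDerivAt.comp u.2 (hasFDerivAt_prodMk_right u.1 u.2)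
  rw [h.fderiv]; rfl

lemma fderiv_fix_y (f : E n → ℝ) (hf : Differentiable ℝ f) (u : E n) (v : Fin n → ℝ) :
    fderiv ℝ (fun x => f (x, u.2)) u.1 v = fderiv ℝ f u (v, 0) := by
  have h : HasFDerivAt (fun x : Fin n → ℝ => f (x, u.2))
      ((fderiv ℝ f u).comp (ContinuousLinearMap.inl ℝ (Fin n → ℝ) (Fin n → ℝ))) u.1 :=
    (hf u).hasFDerivAt.comp u.1 (hasFDerivAt_prodMk_left u.1 u.2)
  rw [h.fderiv]; rfl

lemma contDiff_Dd {f : E n → ℝ} (hf : ContDiff ℝ (⊤:ℕ∞) f) (w : E n) :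
    ContDiff ℝ (⊤:ℕ∞) (Dd f w) := by
  have h : ContDiff ℝ (⊤:ℕ∞) (fderiv ℝ f) := hf.fderiv_right (m := (⊤:ℕ∞)) (by decide)
  exact h.clm_apply contDiff_const

lemma pdy_eq (hL : ContDiff ℝ (⊤:ℕ∞) L) (i : Fin n) (u : E n) :
    pdy L i u = Dd L (0, Pi.single i 1) u :=
  fderiv_fix_x L (hL.differentiable (by decide)) u _

lemma pdx_eq (hL : ContDiff ℝ (⊤:ℕ∞) L) (i : Fin n) (u : E n) :
    pdx L i u = Dd L (Pi.single i 1, 0) u :=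
  fderiv_fix_y L (hL.differentiable (by decide)) u _

lemma Lg_eq (hL : ContDiff ℝ (⊤:ℕ∞) L) (u : E n) (i j : Fin n) :
    Lg L u i j = (1/2) * Dd (Dd L (0, Pi.single i 1)) (0, Pi.single j 1) u := by
  show (1/2) * fderiv ℝ (fun y => pdy L i (u.1, y)) u.2 (Pi.single j 1) = _
  have h1 : (fun y => pdy L i (u.1, y)) = fun y => Dd L (0, Pi.single i 1) (u.1, y) :=
    funext fun y => pdy_eq hL i (u.1, y)
  rw [h1, fderiv_fix_x _ ((contDiff_Dd hL _).differentiable (by decide)) u (Pi.single j 1)]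
  rfl

lemma diff_Dd {f : E n → ℝ} (hf : ContDiff ℝ (⊤:ℕ∞) f) (w : E n) :
    Differentiable ℝ (Dd f w) := (contDiff_Dd hf w).differentiable (by decide)

lemma fderiv_apply_const {f : E n → ℝ} (hf : ContDiff ℝ (⊤:ℕ∞) f) (z u w : E n) :
    fderiv ℝ (fun v => fderiv ℝ f v z) u w = fderiv ℝ (fderiv ℝ f) u w z := by
  have hdiff : DifferentiableAt ℝ (fderiv ℝ f) u :=
    ((hf.fderiv_right (m := (⊤:ℕ∞)) (by decide)).differentiable (by decide)) u
  rw [fderiv_clm_apply hdiff (differentiableAt_const z)]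
  simp

lemma schwarz {f : E n → ℝ} (hf : ContDiff ℝ (⊤:ℕ∞) f) (v w u : E n) :
    Dd (Dd f v) w u = Dd (Dd f w) v u := by
  have hsym : IsSymmSndFDerivAt ℝ f u :=
    (hf.contDiffAt).isSymmSndFDerivAt (by rw [minSmoothness_of_isRCLikeNormedField]; exact (WithTop.coe_le_coe.mpr (le_top : (2:ℕ∞) ≤ ⊤) : ((2:ℕ∞) : WithTop ℕ∞) ≤ ((⊤:ℕ∞) : WithTop ℕ∞)))
  show fderiv ℝ (fun z => fderiv ℝ f z v) u w = fderiv ℝ (fun z => fderiv ℝ f z w) u v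
  rw [fderiv_apply_const hf, fderiv_apply_const hf, hsym.eq]

lemma Lg_symm (hL : ContDiff ℝ (⊤:ℕ∞) L) (u : E n) (i j : Fin n) :
    Lg L u i j = Lg L u j i := by
  rw [Lg_eq hL, Lg_eq hL, schwarz hL]

lemma contDiff_Lg (hL : ContDiff ℝ (⊤:ℕ∞) L) (i j : Fin n) :
    ContDiff ℝ (⊤:ℕ∞) (fun u => Lg L u i j) := by
  have : (fun u => Lg L u i j)
      = fun u => (1/2) * Dd (Dd L (0, Pi.single i 1)) (0, Pi.single j 1) u :=
    funext fun u => Lg_eq hL u i j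
  rw [this]
  exact contDiff_const.mul (contDiff_Dd (contDiff_Dd hL _) _)

lemma contDiff_det {m : ℕ} {M : E n → Matrix (Fin m) (Fin m) ℝ}
    (h : ∀ i j, ContDiff ℝ (⊤:ℕ∞) (fun u => M u i j)) :
    ContDiff ℝ (⊤:ℕ∞) (fun u => (M u).det) := by
  have : (fun u => (M u).det)
      = fun u => ∑ σ : Equiv.Perm (Fin m), (Equiv.Perm.sign σ : ℝ) * ∏ i, M u (σ i) i := by
    funext u
    rw [Matrix.det_apply]
    congr 1; funext σ
    rw [Units.smul_def, zsmul_eq_mul]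
  rw [this]
  exact ContDiff.sum fun σ _ => contDiff_const.mul (contDiff_prod fun i _ => h (σ i) i)

lemma contDiff_inv_entry (hL : ContDiff ℝ (⊤:ℕ∞) L) (hreg : Regular L) (k j : Fin n) :
    ContDiff ℝ (⊤:ℕ∞) (fun u => (Lg L u)⁻¹ k j) := by
  have hdet : ContDiff ℝ (⊤:ℕ∞) (fun u => (Lg L u).det) := contDiff_det (contDiff_Lg hL)
  have hne : ∀ u, (Lg L u).det ≠ 0 := fun u => (hreg u).ne_zero
  have hadj : ContDiff ℝ (⊤:ℕ∞) (fun u => (Lg L u).adjugate k j) := by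
    have : (fun u => (Lg L u).adjugate k j)
        = fun u => ((Lg L u).updateRow j (Pi.single k 1)).det := by
      funext u; rw [Matrix.adjugate_apply]
    rw [this]
    refine contDiff_det fun a b => ?_
    by_cases haj : a = j
    · subst haj
      simpa [Matrix.updateRow_apply] using (contDiff_const :
        ContDiff ℝ (⊤:ℕ∞) (fun _ : E n => (Pi.single k 1 : Fin n → ℝ) b))
    · simpa [Matrix.updateRow_apply, haj] using contDiff_Lg hL a b
  have : (fun u => (Lg L u)⁻¹ k j)
      = fun u => ((Lg L u).det)⁻¹ * (Lg L u).adjugate k j := by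
    funext u
    rw [Matrix.inv_def, Ring.inverse_eq_inv']
    simp [Matrix.smul_apply, smul_eq_mul]
  rw [this]
  exact (hdet.inv hne).mul hadj

def Ff (L : E n → ℝ) (j : Fin n) (u : E n) : ℝ :=
  fderiv ℝ (Dd L (0, Pi.single j 1)) u (u.2, 0) - Dd L (Pi.single j 1, 0) u

lemma Gspray_eq (hL : ContDiff ℝ (⊤:ℕ∞) L) (k : Fin n) (u : E n) :
    Gspray L k u = (1/4) * ∑ j, (Lg L u)⁻¹ k j * Ff L j u := by
  unfold Gspray Ff
  congr 1
  refine Finset.sum_congr rfl fun j _ => ?_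
  congr 1
  rw [pdx_eq hL]
  congr 1
  have h1 : (fun x => pdy L j (x, u.2)) = fun x => Dd L (0, Pi.single j 1) (x, u.2) :=
    funext fun x => pdy_eq hL j (x, u.2)
  rw [h1, fderiv_fix_y _ (diff_Dd hL _) u u.2]

lemma contDiff_Ff (hL : ContDiff ℝ (⊤:ℕ∞) L) (j : Fin n) :
    ContDiff ℝ (⊤:ℕ∞) (Ff L j) := by
  refine ContDiff.sub ?_ (contDiff_Dd hL _)
  refine ContDiff.clm_apply ?_ ?_
  · exact (contDiff_Dd hL _).fderiv_right (m := (⊤:ℕ∞)) (by decide)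
  · exact ContDiff.prodMk (contDiff_snd) contDiff_const

lemma contDiff_Gspray (hL : ContDiff ℝ (⊤:ℕ∞) L) (hreg : Regular L) (k : Fin n) :
    ContDiff ℝ (⊤:ℕ∞) (Gspray L k) := by
  have : Gspray L k = fun u => (1/4) * ∑ j, (Lg L u)⁻¹ k j * Ff L j u :=
    funext fun u => Gspray_eq hL k u
  rw [this]
  exact contDiff_const.mul (ContDiff.sum fun j _ =>
    (contDiff_inv_entry hL hreg k j).mul (contDiff_Ff hL j))

lemma LN_eq (hL : ContDiff ℝ (⊤:ℕ∞) L) (hreg : Regular L) (i k : Fin n) (u : E n) :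
    LN L i k u = Dd (Gspray L i) (0, Pi.single k 1) u :=
  fderiv_fix_x _ ((contDiff_Gspray hL hreg i).differentiable (by decide)) u _

lemma key_P (hL : ContDiff ℝ (⊤:ℕ∞) L) (hreg : Regular L) (j : Fin n) (u : E n) :
    ∑ i, Lg L u i j * Gspray L i u = (1/4) * Ff L j u := by
  have hmul : Lg L u * (Lg L u)⁻¹ = 1 := Matrix.mul_nonsing_inv _ (hreg u)
  calc ∑ i, Lg L u i j * Gspray L i u
      = ∑ i, ∑ m, (1/4) * (Lg L u j i * (Lg L u)⁻¹ i m * Ff L m u) := by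
        refine Finset.sum_congr rfl fun i _ => ?_
        rw [Gspray_eq hL i u, Lg_symm hL u i j, Finset.mul_sum, Finset.mul_sum]
        exact Finset.sum_congr rfl fun m _ => by ring
    _ = ∑ m, (1/4) * ((∑ i, Lg L u j i * (Lg L u)⁻¹ i m) * Ff L m u) := by
        rw [Finset.sum_comm]
        refine Finset.sum_congr rfl fun m _ => ?_
        rw [Finset.sum_mul, Finset.mul_sum]
    _ = ∑ m, (1/4) * ((1 : Matrix (Fin n) (Fin n) ℝ) j m * Ff L m u) := by
        refine Finset.sum_congr rfl fun m _ => ?_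
        rw [← Matrix.mul_apply, hmul]
    _ = (1/4) * Ff L j u := by
        simp [Matrix.one_apply]

def Cm (L : E n → ℝ) (k j : Fin n) (u : E n) : ℝ :=
  Dd (Dd L (0, Pi.single j 1)) (Pi.single k 1, 0) u

lemma D3_swap23 {f : E n → ℝ} (hf : ContDiff ℝ (⊤:ℕ∞) f) (a b c : E n) (u : E n) :
    Dd (Dd (Dd f a) b) c u = Dd (Dd (Dd f a) c) b u :=
  schwarz (contDiff_Dd hf a) b c u

lemma D3_swap12 {f : E n → ℝ} (hf : ContDiff ℝ (⊤:ℕ∞) f) (a b c : E n) (u : E n) :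
    Dd (Dd (Dd f a) b) c u = Dd (Dd (Dd f b) a) c u := by
  rw [show Dd (Dd f a) b = Dd (Dd f b) a from funext fun z => schwarz hf a b z]

lemma fderiv_sum_mul (hL : ContDiff ℝ (⊤:ℕ∞) L) (hreg : Regular L) (j k : Fin n) (u : E n) :
    fderiv ℝ (fun v => ∑ i, Lg L v i j * Gspray L i v) u (0, Pi.single k 1)
      = ∑ i, (fderiv ℝ (fun v => Lg L v i j) u (0, Pi.single k 1) * Gspray L i u
          + Lg L u i j * fderiv ℝ (Gspray L i) u (0, Pi.single k 1)) := by
  have hg : ∀ i : Fin n, DifferentiableAt ℝ (fun v => Lg L v i j) u :=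
    fun i => ((contDiff_Lg hL i j).differentiable (by decide)) u
  have hG : ∀ i : Fin n, DifferentiableAt ℝ (Gspray L i) u :=
    fun i => ((contDiff_Gspray hL hreg i).differentiable (by decide)) u
  rw [fderiv_fun_sum fun i _ => (hg i).fun_mul (hG i)]
  rw [ContinuousLinearMap.sum_apply]
  refine Finset.sum_congr rfl fun i _ => ?_
  rw [fderiv_fun_mul (hg i) (hG i)]
  simp [smul_eq_mul]
  ring

lemma fderiv_Ff (hL : ContDiff ℝ (⊤:ℕ∞) L) (j k : Fin n) (u : E n) :
    fderiv ℝ (Ff L j) u (0, Pi.single k 1)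
      = Dd (Dd (Dd L (0, Pi.single j 1)) (u.2, 0)) (0, Pi.single k 1) u
        + Cm L k j u - Cm L j k u := by
  have hdL := contDiff_Dd hL (0, (Pi.single j 1 : Fin n → ℝ))
  have hc : Differentiable ℝ (fderiv ℝ (Dd L (0, (Pi.single j 1 : Fin n → ℝ)))) :=
    (hdL.fderiv_right (m := (⊤:ℕ∞)) (by decide)).differentiable (by decide)
  set g : E n →L[ℝ] E n :=
    (ContinuousLinearMap.inl ℝ (Fin n → ℝ) (Fin n → ℝ)).comp
      (ContinuousLinearMap.snd ℝ (Fin n → ℝ) (Fin n → ℝ)) with hgdef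
  have hgv : ∀ v : E n, (g v : E n) = (v.2, 0) := fun v => rfl
  have h1 : Ff L j = fun v =>
      (fderiv ℝ (Dd L (0, Pi.single j 1)) v) (g v) - Dd L (Pi.single j 1, 0) v := by
    funext v; rw [hgv]; rfl
  rw [h1, fderiv_fun_sub ((hc u).clm_apply (g.differentiable u)) ((diff_Dd hL _) u)]
  rw [ContinuousLinearMap.sub_apply]
  rw [fderiv_clm_apply (hc u) (g.differentiable u)]
  rw [g.fderiv]
  have h2 : fderiv ℝ (fderiv ℝ (Dd L (0, Pi.single j 1))) u (0, Pi.single k 1) (u.2, 0)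
      = Dd (Dd (Dd L (0, Pi.single j 1)) (u.2, 0)) (0, Pi.single k 1) u := by
    rw [← fderiv_apply_const hdL (u.2, 0) u (0, Pi.single k 1)]; rfl
  have h3 : fderiv ℝ (Dd L (Pi.single j 1, 0)) u (0, Pi.single k 1) = Cm L j k u := by
    show Dd (Dd L (Pi.single j 1, 0)) (0, Pi.single k 1) u = _
    rw [schwarz hL]; rfl
  simp only [ContinuousLinearMap.add_apply, ContinuousLinearMap.coe_comp', Function.comp,
    ContinuousLinearMap.flip_apply]
  rw [h3]
  have h5 : fderiv ℝ (Dd L (0, Pi.single j 1)) u (g (0, Pi.single k 1)) = Cm L k j u := rfl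
  rw [hgv u, h2, h5]
  ring

lemma key_N (hL : ContDiff ℝ (⊤:ℕ∞) L) (hreg : Regular L) (j k : Fin n) (u : E n) :
    ∑ i, (Lg L u i j * LN L i k u - Lg L u i k * LN L i j u)
      = (1/2) * (Cm L k j u - Cm L j k u) := by
  have main : ∀ j k : Fin n,
      ∑ i, (fderiv ℝ (fun v => Lg L v i j) u (0, Pi.single k 1) * Gspray L i u
          + Lg L u i j * fderiv ℝ (Gspray L i) u (0, Pi.single k 1))
        = (1/4) * (Dd (Dd (Dd L (0, Pi.single j 1)) (u.2, 0)) (0, Pi.single k 1) u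
            + Cm L k j u - Cm L j k u) := by
    intro j k
    have hfun : (fun v => ∑ i, Lg L v i j * Gspray L i v) = fun v => (1/4) * Ff L j v :=
      funext fun v => key_P hL hreg j v
    have hder := congrArg (fun F => fderiv ℝ F u (0, (Pi.single k 1 : Fin n → ℝ))) hfun
    beta_reduce at hder
    rw [fderiv_sum_mul hL hreg j k u] at hder
    rw [fderiv_const_mul (((contDiff_Ff hL j).differentiable (by decide)) u) (1/4)] at hder
    rw [ContinuousLinearMap.smul_apply, smul_eq_mul, fderiv_Ff hL j k u] at hder
    exact hder
  have hLN : ∀ (i m : Fin n), LN L i m u = fderiv ℝ (Gspray L i) u (0, Pi.single m 1) :=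
    fun i m => LN_eq hL hreg i m u
  have Tsym : ∀ i : Fin n, fderiv ℝ (fun v => Lg L v i j) u (0, Pi.single k 1)
      = fderiv ℝ (fun v => Lg L v i k) u (0, Pi.single j 1) := by
    intro i
    have e1 : (fun v => Lg L v i j)
        = fun v => (1/2) * Dd (Dd L (0, Pi.single i 1)) (0, Pi.single j 1) v :=
      funext fun v => Lg_eq hL v i j
    have e2 : (fun v => Lg L v i k)
        = fun v => (1/2) * Dd (Dd L (0, Pi.single i 1)) (0, Pi.single k 1) v :=
      funext fun v => Lg_eq hL v i k
    rw [e1, e2, fderiv_const_mul ((diff_Dd (contDiff_Dd hL _) _) u),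
      fderiv_const_mul ((diff_Dd (contDiff_Dd hL _) _) u)]
    simp only [ContinuousLinearMap.smul_apply, smul_eq_mul]
    congr 1
    exact D3_swap23 hL _ _ _ u
  have Qsym : Dd (Dd (Dd L (0, Pi.single j 1)) (u.2, 0)) (0, Pi.single k 1) u
      = Dd (Dd (Dd L (0, Pi.single k 1)) (u.2, 0)) (0, Pi.single j 1) u := by
    rw [D3_swap12 hL (0, Pi.single j 1) (u.2, 0) (0, Pi.single k 1) u,
      D3_swap23 hL (u.2, 0) (0, Pi.single j 1) (0, Pi.single k 1) u,
      D3_swap12 hL (u.2, 0) (0, Pi.single k 1) (0, Pi.single j 1) u]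
  calc ∑ i, (Lg L u i j * LN L i k u - Lg L u i k * LN L i j u)
      = ∑ i, ((fderiv ℝ (fun v => Lg L v i j) u (0, Pi.single k 1) * Gspray L i u
            + Lg L u i j * fderiv ℝ (Gspray L i) u (0, Pi.single k 1))
          - (fderiv ℝ (fun v => Lg L v i k) u (0, Pi.single j 1) * Gspray L i u
            + Lg L u i k * fderiv ℝ (Gspray L i) u (0, Pi.single j 1))) := by
        refine Finset.sum_congr rfl fun i _ => ?_
        rw [hLN i k, hLN i j, Tsym i]
        ring
    _ = (1/4) * (Dd (Dd (Dd L (0, Pi.single j 1)) (u.2, 0)) (0, Pi.single k 1) u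
            + Cm L k j u - Cm L j k u)
        - (1/4) * (Dd (Dd (Dd L (0, Pi.single k 1)) (u.2, 0)) (0, Pi.single j 1) u
            + Cm L j k u - Cm L k j u) := by
        rw [Finset.sum_sub_distrib, main j k, main k j]
    _ = (1/2) * (Cm L k j u - Cm L j k u) := by
        rw [Qsym]; ring

lemma vec_expand (f : Fin n → ℝ) : f = ∑ k, f k • (Pi.single k 1 : Fin n → ℝ) := by
  conv_lhs => rw [← Finset.univ_sum_single f]
  refine Finset.sum_congr rfl fun k _ => ?_
  rw [← Pi.single_smul, smul_eq_mul, mul_one]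

lemma clm_expand (φ : E n →L[ℝ] ℝ) (X : E n) :
    φ X = ∑ k, X.1 k * φ (Pi.single k 1, 0) + ∑ k, X.2 k * φ (0, Pi.single k 1) := by
  have hX : X = (∑ k, X.1 k • (((Pi.single k 1 : Fin n → ℝ), (0 : Fin n → ℝ)) : E n))
      + ∑ k, X.2 k • (((0 : Fin n → ℝ), (Pi.single k 1 : Fin n → ℝ)) : E n) := by
    refine Prod.ext ?_ ?_ <;>
      simp only [Prod.fst_sum, Prod.snd_sum, Prod.smul_fst, Prod.smul_snd, Prod.fst_add,
        Prod.snd_add, smul_zero, Finset.sum_const_zero, add_zero, zero_add]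
    · exact vec_expand X.1
    · exact vec_expand X.2
  conv_lhs => rw [hX]
  rw [map_add, map_sum, map_sum]
  refine congrArg₂ (· + ·) ?_ ?_ <;> refine Finset.sum_congr rfl fun k _ => ?_ <;>
    rw [map_smul, smul_eq_mul]

lemma omega_rw (hL : ContDiff ℝ (⊤:ℕ∞) L) (W : E n) :
    (fun v => omega1 L v W) = fun v => (1/2) * ∑ i, Dd L (0, Pi.single i 1) v * W.1 i := by
  funext v
  unfold omega1
  rw [show (1:ℝ)/2 = 1/2 from rfl]
  congr 1
  exact Finset.sum_congr rfl fun i _ => by rw [pdy_eq hL]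

lemma contDiff_omega (hL : ContDiff ℝ (⊤:ℕ∞) L) (W : E n) :
    ContDiff ℝ (⊤:ℕ∞) (fun v => omega1 L v W) := by
  rw [omega_rw hL W]
  exact contDiff_const.mul (ContDiff.sum fun i _ => (contDiff_Dd hL _).mul contDiff_const)

lemma fderiv_omega (hL : ContDiff ℝ (⊤:ℕ∞) L) (u X Y : E n) :
    fderiv ℝ (fun v => omega1 L v Y) u X
      = (1/2) * ∑ i, fderiv ℝ (Dd L (0, Pi.single i 1)) u X * Y.1 i := by
  rw [omega_rw hL Y]
  have hd : ∀ i : Fin n, DifferentiableAt ℝ (fun v => Dd L (0, Pi.single i 1) v * Y.1 i) u :=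
    fun i => ((diff_Dd hL _) u).mul_const _
  rw [fderiv_const_mul (DifferentiableAt.fun_sum fun i _ => hd i) (1/2)]
  rw [ContinuousLinearMap.smul_apply, smul_eq_mul]
  congr 1
  rw [fderiv_fun_sum fun i _ => hd i, ContinuousLinearMap.sum_apply]
  refine Finset.sum_congr rfl fun i _ => ?_
  rw [fderiv_mul_const ((diff_Dd hL _) u)]
  rw [ContinuousLinearMap.smul_apply, smul_eq_mul]
  ring

lemma B_expand (hL : ContDiff ℝ (⊤:ℕ∞) L) (u : E n) (i : Fin n) (X : E n) :
    fderiv ℝ (Dd L (0, Pi.single i 1)) u X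
      = ∑ k, X.1 k * Cm L k i u + ∑ k, X.2 k * (2 * Lg L u i k) := by
  rw [clm_expand (fderiv ℝ (Dd L (0, Pi.single i 1)) u) X]
  congr 1
  refine Finset.sum_congr rfl fun k _ => ?_
  have h : fderiv ℝ (Dd L (0, Pi.single i 1)) u ((0 : Fin n → ℝ), (Pi.single k 1 : Fin n → ℝ))
      = Dd (Dd L (0, Pi.single i 1)) (0, Pi.single k 1) u := rfl
  rw [h, Lg_eq hL u i k]
  ring

def canon (L : E n → ℝ) (u X Y : E n) : ℝ :=
  (∑ i, ∑ k, Lg L u i k * (X.2 k * Y.1 i - Y.2 k * X.1 i))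
    + ∑ i, ∑ k, (1/2) * (Cm L k i u - Cm L i k u) * (X.1 k * Y.1 i)

lemma dsum_add (f g : Fin n → Fin n → ℝ) :
    ∑ i, ∑ k, (f i k + g i k) = (∑ i, ∑ k, f i k) + ∑ i, ∑ k, g i k := by
  rw [← Finset.sum_add_distrib]
  exact Finset.sum_congr rfl fun i _ => Finset.sum_add_distrib

lemma dsum_sub (f g : Fin n → Fin n → ℝ) :
    ∑ i, ∑ k, (f i k - g i k) = (∑ i, ∑ k, f i k) - ∑ i, ∑ k, g i k := by
  rw [← Finset.sum_sub_distrib]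
  exact Finset.sum_congr rfl fun i _ => Finset.sum_sub_distrib _ _

lemma dsum_swap (f : Fin n → Fin n → ℝ) :
    ∑ i, ∑ k, f i k = ∑ i, ∑ k, f k i := Finset.sum_comm

lemma dsum_congr {f g : Fin n → Fin n → ℝ} (h : ∀ i k, f i k = g i k) :
    ∑ i, ∑ k, f i k = ∑ i, ∑ k, g i k :=
  Finset.sum_congr rfl fun i _ => Finset.sum_congr rfl fun k _ => h i k

lemma domega_canon (hL : ContDiff ℝ (⊤:ℕ∞) L) (u X Y : E n) :
    fderiv ℝ (fun v => omega1 L v Y) u X - fderiv ℝ (fun v => omega1 L v X) u Y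
      = canon L u X Y := by
  rw [fderiv_omega hL u X Y, fderiv_omega hL u Y X]
  have expand : ∀ W V : E n, (1/2) * ∑ i, fderiv ℝ (Dd L (0, Pi.single i 1)) u W * V.1 i
      = (∑ i, ∑ k, (1/2) * (W.1 k * Cm L k i u * V.1 i))
        + ∑ i, ∑ k, (W.2 k * Lg L u i k * V.1 i) := by
    intro W V
    rw [← dsum_add, Finset.mul_sum]
    refine Finset.sum_congr rfl fun i _ => ?_
    rw [B_expand hL u i W, add_mul, Finset.sum_mul, Finset.sum_mul, mul_add, Finset.mul_sum,
      Finset.mul_sum, ← Finset.sum_add_distrib]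
    exact Finset.sum_congr rfl fun k _ => by ring
  rw [expand X Y, expand Y X]
  have hswap : (∑ i, ∑ k, (1/2) * (Y.1 k * Cm L k i u * X.1 i))
      = ∑ i, ∑ k, (1/2) * (Y.1 i * Cm L i k u * X.1 k) := dsum_swap _
  rw [hswap]
  unfold canon
  rw [← dsum_add, ← dsum_add, ← dsum_add, ← dsum_sub]
  exact dsum_congr fun i k => by ring

lemma theta_canon (hL : ContDiff ℝ (⊤:ℕ∞) L) (hreg : Regular L) (u X Y : E n) :
    theta2 L u X Y = canon L u X Y := by
  unfold theta2
  calc ∑ i, ∑ j, Lg L u i j *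
        ((X.2 i + ∑ k, LN L i k u * X.1 k) * Y.1 j
          - (Y.2 i + ∑ k, LN L i k u * Y.1 k) * X.1 j)
      = (∑ i, ∑ j, Lg L u i j * (X.2 i * Y.1 j - Y.2 i * X.1 j))
        + ∑ i, ∑ j, ∑ k, (Lg L u i j * LN L i k u * (X.1 k * Y.1 j - Y.1 k * X.1 j)) := by
        rw [← dsum_add]
        refine dsum_congr fun i j => ?_
        have h1 : (X.2 i + ∑ k, LN L i k u * X.1 k) * Y.1 j
            - (Y.2 i + ∑ k, LN L i k u * Y.1 k) * X.1 j
            = (X.2 i * Y.1 j - Y.2 i * X.1 j)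
              + ((∑ k, LN L i k u * X.1 k) * Y.1 j - (∑ k, LN L i k u * Y.1 k) * X.1 j) := by
          ring
        rw [h1, mul_add]
        congr 1
        rw [Finset.sum_mul, Finset.sum_mul, mul_sub, Finset.mul_sum, Finset.mul_sum,
          ← Finset.sum_sub_distrib]
        exact Finset.sum_congr rfl fun k _ => by ring
    _ = (∑ i, ∑ k, Lg L u i k * (X.2 k * Y.1 i - Y.2 k * X.1 i))
        + ∑ j, ∑ k, (∑ i, (Lg L u i j * LN L i k u)) * (X.1 k * Y.1 j - Y.1 k * X.1 j) := by
        congr 1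
        · rw [dsum_swap]
          exact dsum_congr fun i k => by rw [Lg_symm hL u k i]
        · rw [Finset.sum_comm]
          refine Finset.sum_congr rfl fun j _ => ?_
          rw [Finset.sum_comm]
          refine Finset.sum_congr rfl fun k _ => ?_
          rw [Finset.sum_mul]
    _ = (∑ i, ∑ k, Lg L u i k * (X.2 k * Y.1 i - Y.2 k * X.1 i))
        + ∑ j, ∑ k, ((1/2) * (Cm L k j u - Cm L j k u)) * (X.1 k * Y.1 j) := by
        congr 1
        calc ∑ j, ∑ k, (∑ i, (Lg L u i j * LN L i k u)) * (X.1 k * Y.1 j - Y.1 k * X.1 j)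
            = (∑ j, ∑ k, (∑ i, (Lg L u i j * LN L i k u)) * (X.1 k * Y.1 j))
              - ∑ j, ∑ k, (∑ i, (Lg L u i j * LN L i k u)) * (Y.1 k * X.1 j) := by
              rw [← dsum_sub]; exact dsum_congr fun j k => by ring
          _ = (∑ j, ∑ k, (∑ i, (Lg L u i j * LN L i k u)) * (X.1 k * Y.1 j))
              - ∑ j, ∑ k, (∑ i, (Lg L u i k * LN L i j u)) * (Y.1 j * X.1 k) := by
              congr 1; exact dsum_swap _
          _ = ∑ j, ∑ k, (∑ i, (Lg L u i j * LN L i k u - Lg L u i k * LN L i j u))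
                * (X.1 k * Y.1 j) := by
              rw [← dsum_sub]
              refine dsum_congr fun j k => ?_
              rw [Finset.sum_sub_distrib, sub_mul]
              ring
          _ = ∑ j, ∑ k, ((1/2) * (Cm L k j u - Cm L j k u)) * (X.1 k * Y.1 j) :=
              dsum_congr fun j k => by rw [key_N hL hreg j k u]
    _ = canon L u X Y := rfl

lemma theta_eq_domega (hL : ContDiff ℝ (⊤:ℕ∞) L) (hreg : Regular L) (u X Y : E n) :
    theta2 L u X Y
      = fderiv ℝ (fun v => omega1 L v Y) u X - fderiv ℝ (fun v => omega1 L v X) u Y :=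
  (theta_canon hL hreg u X Y).trans (domega_canon hL u X Y).symm

theorem theta_closed' (hL : ContDiff ℝ (⊤:ℕ∞) L) (hreg : Regular L) :
    ∀ (u : E n) (X Y Z : E n),
      fderiv ℝ (fun v => theta2 L v Y Z) u X
        + fderiv ℝ (fun v => theta2 L v Z X) u Y
        + fderiv ℝ (fun v => theta2 L v X Y) u Z = 0 := by
  intro u X Y Z
  have hω : ∀ W : E n, ContDiff ℝ (⊤:ℕ∞) (fun v => omega1 L v W) := contDiff_omega hL
  have key : ∀ (A B C : E n),
      fderiv ℝ (fun v => theta2 L v B C) u A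
        = Dd (Dd (fun w => omega1 L w C) B) A u - Dd (Dd (fun w => omega1 L w B) C) A u := by
    intro A B C
    have hfun : (fun v => theta2 L v B C)
        = fun v => Dd (fun w => omega1 L w C) B v - Dd (fun w => omega1 L w B) C v :=
      funext fun v => theta_eq_domega hL hreg v B C
    rw [hfun, fderiv_fun_sub ((diff_Dd (hω C) B) u) ((diff_Dd (hω B) C) u)]
    rfl
  rw [key X Y Z, key Y Z X, key Z X Y]
  have s1 := schwarz (hω Z) Y X u
  have s2 := schwarz (hω X) Z Y u
  have s3 := schwarz (hω Y) X Z u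
  linarith


end AuxProof

/-- For a smooth regular effective Lagrangian, the almost symplectic 2-form `θ` is
closed: the cyclic sum of directional derivatives
`D_X θ(u)(Y,Z) + D_Y θ(u)(Z,X) + D_Z θ(u)(X,Y)` vanishes for all constant vectors. -/
theorem theta_closed {n : ℕ} (L : E n → ℝ)
    (hL : ContDiff ℝ (⊤ : ℕ∞) L) (hreg : Regular L) :
    ∀ (u : E n) (X Y Z : E n),
      fderiv ℝ (fun v => theta2 L v Y Z) u X
        + fderiv ℝ (fun v => theta2 L v Z X) u Y
        + fderiv ℝ (fun v => theta2 L v X Y) u Z = 0 := by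
  intro u X Y Z
  exact theta_closed' (hL.of_le (by simp)) hreg u X Y Z
end
end

section
/- On the space W⊗Λ of exterior-form-valued polynomials, the Fedosov operators satisfy the homotopy identity a = (δ ∘ δ⁻¹ + δ⁻¹ ∘ δ + σ)(a) for every a ∈ W⊗Λ, where σ(a) is the bihomogeneous component of a of polynomial degree 0 and exterior degree 0. -/
open scoped BigOperators

noncomputable section

/-- The space `W⊗Λ = ℝ[z¹,…,zᵐ] ⊗ Λ^•(ℝᵐ)^*` of exterior-form–valued polynomials,
encoded via the basis `ε^S = ε^{α₁} ∧ ⋯ ∧ ε^{α_q}` (for `S = {α₁ < ⋯ < α_q}`) of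
`Λ^•(ℝᵐ)^*`: an element is the family of its polynomial components indexed by `S`. -/
abbrev WLam (m : ℕ) := Finset (Fin m) → MvPolynomial (Fin m) ℝ

/-- The sign `(−1)^{#{β ∈ S : β < α}}` arising from `ε^α ∧ ε^{S \ {α}} = ± ε^S`
and `ι_{e_α} ε^S = ± ε^{S \ {α}}`. -/
def fsign {m : ℕ} (α : Fin m) (S : Finset (Fin m)) : ℝ :=
  (-1 : ℝ) ^ (S.filter (· < α)).card

/-- The Fedosov operator `δ(P ⊗ ω) = Σ_α (∂P/∂z^α) ⊗ (ε^α ∧ ω)`. -/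
def fdel {m : ℕ} (a : WLam m) : WLam m := fun S =>
  ∑ α ∈ S, fsign α S • MvPolynomial.pderiv α (a (S.erase α))

/-- The Fedosov operator `δ⁻¹`: on a bihomogeneous element `P ⊗ ω` with `P` of
polynomial degree `p` and `ω` of exterior degree `q`,
`δ⁻¹(P ⊗ ω) = (1/(p+q)) Σ_α (z^α P) ⊗ ι_{e_α} ω` for `p + q > 0`, and `0` for
`p = q = 0`, extended linearly. -/
def fdelInv {m : ℕ} (a : WLam m) : WLam m := fun S =>
  ∑ α ∈ Sᶜ, fsign α S •
    ∑ p ∈ Finset.range ((a (insert α S)).totalDegree + 1),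
      (((p + (insert α S).card : ℕ) : ℝ))⁻¹ •
        (MvPolynomial.X α * MvPolynomial.homogeneousComponent p (a (insert α S)))

/-- The projection `σ` onto the bihomogeneous component of polynomial degree `0`
and exterior degree `0`. -/
def fsig {m : ℕ} (a : WLam m) : WLam m := fun S =>
  if S = (∅ : Finset (Fin m)) then MvPolynomial.C (MvPolynomial.coeff 0 (a ∅)) else 0

/-! `δ⁻¹ = κ ∘ N⁻¹`, where `κ = Σ_α z^α ι_{e_α}` is the Koszul operator and `N⁻¹` divides the
component of bidegree `(p, q)` by `p + q` (and kills bidegree `(0, 0)`, since `(0 : ℝ)⁻¹ = 0`).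
As `δ` preserves `p + q` it commutes with `N⁻¹`, so `δ δ⁻¹ + δ⁻¹ δ = (δ κ + κ δ) N⁻¹`. By the
Leibniz rule `δ κ + κ δ = q + Σ_α z^α ∂_α`, which by Euler's identity is multiplication by `p + q`
on bidegree `(p, q)`. Hence `δ δ⁻¹ + δ⁻¹ δ` is the identity off bidegree `(0, 0)` and vanishes on
it, where `σ` takes over. -/

open MvPolynomial Finset

theorem MvPolynomial.coeff_sum_X_mul_pderiv {σ R : Type*} [Fintype σ] [CommSemiring R]
    (f : MvPolynomial σ R) (d : σ →₀ ℕ) :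
    coeff d (∑ i, X i * pderiv i f) = d.degree • coeff d f := by
  classical
  induction f using MvPolynomial.induction_on' with
  | monomial e r =>
    simp_rw [X_mul_pderiv_monomial, ← Finset.sum_smul, ← Finsupp.degree_eq_sum, coeff_smul,
      coeff_monomial]
    split_ifs with h
    · rw [h]
    · rw [smul_zero, smul_zero]
  | add f g hf hg => simp only [map_add, mul_add, Finset.sum_add_distrib, coeff_add, hf, hg,
      smul_add]

section

variable {m : ℕ}

theorem fsign_mul_self (α : Fin m) (S : Finset (Fin m)) : fsign α S * fsign α S = 1 := by
  rw [fsign, ← pow_add]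
  exact Even.neg_one_pow ⟨_, rfl⟩

theorem fsign_erase_self (α : Fin m) (S : Finset (Fin m)) :
    fsign α (S.erase α) = fsign α S := by
  rw [fsign, fsign, filter_erase, erase_eq_of_notMem (by simp)]

theorem fsign_insert_self (α : Fin m) (S : Finset (Fin m)) :
    fsign α (insert α S) = fsign α S := by
  rw [fsign, fsign, filter_insert, if_neg (lt_irrefl α)]

theorem fsign_mul_fsign_erase {α β : Fin m} {S : Finset (Fin m)} (hα : α ∈ S) (hβ : β ∉ S) :
    fsign α S * fsign β (S.erase α) = -(fsign β S * fsign α (insert β S)) := by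
  have hne : α ≠ β := fun h => hβ (h ▸ hα)
  rcases hne.lt_or_gt with hlt | hlt
  · have h1 : fsign α (insert β S) = fsign α S := by
      rw [fsign, fsign, filter_insert, if_neg (not_lt.mpr hlt.le)]
    have h2 : fsign β (S.erase α) = -fsign β S := by
      rw [fsign, fsign, filter_erase, ← card_erase_add_one (s := S.filter (· < β)) (a := α)
        (by simp [hα, hlt]), pow_succ, mul_neg_one, neg_neg]
    rw [h1, h2]; ring
  · have h1 : fsign β (S.erase α) = fsign β S := by
      rw [fsign, fsign, filter_erase, erase_eq_of_notMem (by simp [not_lt.mpr hlt.le])]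
    have h2 : fsign α (insert β S) = -fsign α S := by
      rw [fsign, fsign, filter_insert, if_pos hlt, card_insert_of_notMem (by simp [hβ]),
        pow_succ]
      ring
    rw [h1, h2]; ring

def koszul (b : WLam m) : WLam m := fun S =>
  ∑ α ∈ Sᶜ, fsign α S • (X α * b (insert α S))

def weightInv (b : WLam m) : WLam m := fun S =>
  ∑ p ∈ range ((b S).totalDegree + 1), ((p + #S : ℕ) : ℝ)⁻¹ • homogeneousComponent p (b S)

theorem fdelInv_eq_koszul_weightInv (a : WLam m) : fdelInv a = koszul (weightInv a) := by
  funext S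
  simp only [fdelInv, koszul, weightInv, mul_sum, mul_smul_comm]

theorem coeff_weightInv (b : WLam m) (S : Finset (Fin m)) (d : Fin m →₀ ℕ) :
    coeff d (weightInv b S) = ((d.degree + #S : ℕ) : ℝ)⁻¹ * coeff d (b S) := by
  simp only [weightInv, coeff_sum, coeff_smul, coeff_homogeneousComponent, smul_eq_mul,
    mul_ite, mul_zero, sum_ite_eq, mem_range, Nat.lt_succ_iff]
  split_ifs with h
  · rfl
  · rw [coeff_eq_zero_of_totalDegree_lt (not_le.mp h), mul_zero]

theorem fdel_weightInv (b : WLam m) : fdel (weightInv b) = weightInv (fdel b) := by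
  funext S
  ext d
  simp only [coeff_weightInv, fdel, coeff_sum, coeff_smul, coeff_pderiv, smul_eq_mul, mul_sum]
  refine sum_congr rfl fun α hα => ?_
  rw [map_add, Finsupp.degree_single, add_assoc, add_comm 1, card_erase_add_one hα]
  ring

theorem fdel_koszul_apply (b : WLam m) (S : Finset (Fin m)) :
    fdel (koszul b) S = ∑ α ∈ S, (b S + X α * pderiv α (b S)) +
      ∑ α ∈ S, ∑ β ∈ Sᶜ, (fsign α S * fsign β (S.erase α)) •
        (X β * pderiv α (b (insert β (S.erase α)))) := by
  simp only [fdel, koszul]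
  rw [← sum_add_distrib]
  refine sum_congr rfl fun α hα => ?_
  rw [compl_erase, sum_insert (by simp [hα]), insert_erase hα, map_add, smul_add, map_sum, smul_sum]
  congr 1
  · rw [Derivation.map_smul, pderiv_mul, pderiv_X_self, one_mul, smul_smul, fsign_erase_self,
      fsign_mul_self, one_smul]
  · refine sum_congr rfl fun β hβ => ?_
    have hne : β ≠ α := fun h => (mem_compl.mp hβ) (h ▸ hα)
    rw [Derivation.map_smul, pderiv_mul, pderiv_X_of_ne hne, zero_mul, zero_add, smul_smul]

theorem koszul_fdel_apply (b : WLam m) (S : Finset (Fin m)) :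
    koszul (fdel b) S = ∑ β ∈ Sᶜ, X β * pderiv β (b S) +
      ∑ β ∈ Sᶜ, ∑ α ∈ S, (fsign β S * fsign α (insert β S)) •
        (X β * pderiv α (b (insert β (S.erase α)))) := by
  simp only [fdel, koszul]
  rw [← sum_add_distrib]
  refine sum_congr rfl fun β hβ => ?_
  have hβS : β ∉ S := mem_compl.mp hβ
  rw [sum_insert hβS, mul_add, smul_add, mul_sum, smul_sum, erase_insert hβS, mul_smul_comm,
    smul_smul, fsign_insert_self, fsign_mul_self, one_smul]
  refine congrArg _ (sum_congr rfl fun α hα => ?_)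
  have hne : α ≠ β := fun h => hβS (h ▸ hα)
  rw [mul_smul_comm, smul_smul, erase_insert_of_ne hne.symm]

theorem fdel_koszul_add_koszul_fdel (b : WLam m) (S : Finset (Fin m)) :
    fdel (koszul b) S + koszul (fdel b) S = #S • b S + ∑ α, X α * pderiv α (b S) := by
  have hcross : ∑ α ∈ S, ∑ β ∈ Sᶜ, (fsign α S * fsign β (S.erase α)) •
        (X β * pderiv α (b (insert β (S.erase α)))) +
      ∑ β ∈ Sᶜ, ∑ α ∈ S, (fsign β S * fsign α (insert β S)) •
        (X β * pderiv α (b (insert β (S.erase α)))) = 0 := by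
    rw [sum_comm (s := Sᶜ), ← sum_add_distrib]
    refine sum_eq_zero fun α hα => ?_
    rw [← sum_add_distrib]
    refine sum_eq_zero fun β hβ => ?_
    rw [fsign_mul_fsign_erase hα (mem_compl.mp hβ), neg_smul, neg_add_cancel]
  rw [fdel_koszul_apply, koszul_fdel_apply, sum_add_distrib, sum_const,
    ← sum_add_sum_compl S fun α => X α * pderiv α (b S)]
  linear_combination hcross

theorem coeff_fdel_koszul_add_koszul_fdel (b : WLam m) (S : Finset (Fin m))
    (d : Fin m →₀ ℕ) :
    coeff d (fdel (koszul b) S + koszul (fdel b) S) = (d.degree + #S) • coeff d (b S) := by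
  rw [fdel_koszul_add_koszul_fdel, coeff_add, coeff_smul, coeff_sum_X_mul_pderiv, add_smul,
    add_comm]

theorem coeff_fsig (a : WLam m) (S : Finset (Fin m)) (d : Fin m →₀ ℕ) :
    coeff d (fsig a S) = if d.degree + #S = 0 then coeff d (a S) else 0 := by
  by_cases hS : S = ∅
  · subst hS
    simp only [fsig, if_true, coeff_C, card_empty, add_zero, Finsupp.degree_eq_zero_iff]
    by_cases hd : d = 0
    · simp [hd]
    · simp [hd, Ne.symm hd]
  · have : #S ≠ 0 := by simpa using hS
    simp [fsig, hS, this]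

end

/-- The Fedosov homotopy identity `a = (δ δ⁻¹ + δ⁻¹ δ + σ)(a)` on `W⊗Λ`. -/
theorem fedosov_homotopy_identity {m : ℕ} :
    ∀ a : WLam m, fdel (fdelInv a) + fdelInv (fdel a) + fsig a = a := by
  intro a
  funext S
  ext d
  have key := coeff_fdel_koszul_add_koszul_fdel (weightInv a) S d
  rw [fdel_weightInv, ← fdelInv_eq_koszul_weightInv, ← fdelInv_eq_koszul_weightInv,
    coeff_weightInv, nsmul_eq_mul, ← mul_assoc] at key
  rw [Pi.add_apply, Pi.add_apply, coeff_add, key, coeff_fsig]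
  split_ifs with h
  · rw [h, Nat.cast_zero, zero_mul, zero_mul, zero_add]
  · rw [mul_inv_cancel₀ (Nat.cast_ne_zero.mpr h), one_mul, add_zero]
end
end
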